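/- Let ℓ(s) = 1 + |log s|, ℓℓ(s) = 1 + log ℓ(s), ℓℓℓ(s) = 1 + log ℓℓ(s). For q ∈ [1,∞) and λ < 0, one has ‖s^{λ - 1/q'} ℓ(s)^{-1/q'} ℓℓ(s)^{-1/q'} ℓℓℓ(s)^{-1}‖_{L^{q'}(r, 1-r)} ≈ r^{λ} ℓ(r)^{-1/q'} ℓℓ(r)^{-1/q'} ℓℓℓ(r)^{-1} near 0, with constants independent of r. -/

import Mathlib

open MeasureTheory Set
open scoped ENNReal

noncomputable def ell (s : ℝ) : ℝ := 1 + |Real.log s|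
noncomputable def ellell (s : ℝ) : ℝ := 1 + Real.log (ell s)
noncomputable def ellellell (s : ℝ) : ℝ := 1 + Real.log (ellell s)

/-!
The integrand is `s ^ (λ - 1/q') * W s` with `W = ℓ^(-1/q') ℓℓ^(-1/q') ℓℓℓ^(-1)`. The weight `W`
is nondecreasing on `(0, 1]`, bounded by `1`, dominates `r ^ δ` near `0` for every `δ > 0`, and for
small `r` changes by at most a constant factor between `r` and `√r` (a square root only halves
`|log r|`). On `(r, 2r)` the integrand is at least `(2r)^(λ - 1/q') W r`, which gives the lower bound.
For the upper bound split at `√r`: on `(r, √r]` replace `W s` by a multiple of `W r` and use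
`‖s ^ (λ - 1/q')‖_{L^q'(r, ∞)} ≲ r ^ λ`; on `(√r, ∞)` bound `W` by `1`, and the resulting
`r ^ (λ/2)` is at most `r ^ λ W r`.
-/

open Filter Topology

lemma ell_ge_one (s : ℝ) : 1 ≤ ell s := by
  simp [ell]

lemma ell_pos (s : ℝ) : 0 < ell s := one_pos.trans_le (ell_ge_one s)

lemma ellell_ge_one (s : ℝ) : 1 ≤ ellell s := by
  simpa [ellell] using Real.log_nonneg (ell_ge_one s)

lemma ellell_pos (s : ℝ) : 0 < ellell s := one_pos.trans_le (ellell_ge_one s)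

lemma ellellell_ge_one (s : ℝ) : 1 ≤ ellellell s := by
  simpa [ellellell] using Real.log_nonneg (ellell_ge_one s)

lemma ellellell_pos (s : ℝ) : 0 < ellellell s := one_pos.trans_le (ellellell_ge_one s)

lemma one_add_log_le_self {x : ℝ} (hx : 0 < x) : 1 + Real.log x ≤ x := by
  linarith [Real.log_le_sub_one_of_pos hx]

lemma ellell_le_ell (s : ℝ) : ellell s ≤ ell s := one_add_log_le_self (ell_pos s)

lemma ellellell_le_ell (s : ℝ) : ellellell s ≤ ell s :=
  (one_add_log_le_self (ellell_pos s)).trans (ellell_le_ell s)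

lemma ell_eq_one_sub_log {s : ℝ} (hs : 0 < s) (hs1 : s ≤ 1) : ell s = 1 - Real.log s := by
  rw [ell, abs_of_nonpos (Real.log_nonpos hs.le hs1), sub_eq_add_neg]

lemma ell_antitoneOn : AntitoneOn ell (Ioc 0 1) := fun s hs t ht hst => by
  rw [ell_eq_one_sub_log hs.1 hs.2, ell_eq_one_sub_log ht.1 ht.2]
  linarith [Real.log_le_log hs.1 hst]

lemma ellell_antitoneOn : AntitoneOn ellell (Ioc 0 1) := fun s hs t ht hst => by
  simpa [ellell] using Real.log_le_log (ell_pos t) (ell_antitoneOn hs ht hst)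

lemma ellellell_antitoneOn : AntitoneOn ellellell (Ioc 0 1) := fun s hs t ht hst => by
  simpa [ellellell] using Real.log_le_log (ellell_pos t) (ellell_antitoneOn hs ht hst)

lemma ell_le_two_mul_ell {r s : ℝ} (hr : 0 < r) (hrs : r ≤ s) (hs : s ≤ √r) :
    ell r ≤ 2 * ell s := by
  have h1 : Real.log s ≤ Real.log r / 2 := by
    rw [← Real.log_sqrt hr.le]
    exact Real.log_le_log (hr.trans_le hrs) hs
  have h2 : Real.log r ≤ Real.log s := Real.log_le_log hr hrs
  rw [ell, ell, abs_of_nonpos (by linarith : Real.log r ≤ 0)]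
  linarith [neg_le_abs (Real.log s)]

lemma one_add_log_le_two_mul {x y : ℝ} (hy : 2 ≤ y) (hyx : y ≤ 2 * x) :
    1 + Real.log y ≤ 2 * (1 + Real.log x) := by
  have hx : 0 < x := by linarith
  have h2 : Real.log y ≤ Real.log 2 + Real.log x := by
    rw [← Real.log_mul two_ne_zero hx.ne']
    exact Real.log_le_log (by linarith) hyx
  have hlogx : 0 ≤ Real.log x := Real.log_nonneg (by linarith)
  linarith [Real.log_two_lt_d9]

lemma ellell_le_two_mul_ellell {r s : ℝ} (hr : 0 < r) (hrs : r ≤ s) (hs : s ≤ √r)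
    (h2 : 2 ≤ ell r) : ellell r ≤ 2 * ellell s :=
  one_add_log_le_two_mul h2 (ell_le_two_mul_ell hr hrs hs)

lemma ellellell_le_two_mul_ellellell {r s : ℝ} (hr : 0 < r) (hrs : r ≤ s) (hs : s ≤ √r)
    (h2 : 2 ≤ ellell r) : ellellell r ≤ 2 * ellellell s :=
  one_add_log_le_two_mul h2 (ellell_le_two_mul_ellell hr hrs hs (h2.trans (ellell_le_ell r)))

lemma tendsto_ell_nhdsGT_zero : Tendsto ell (𝓝[>] 0) atTop :=
  tendsto_atTop_add_const_left _ 1 (tendsto_abs_atBot_atTop.comp Real.tendsto_log_nhdsGT_zero)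

lemma tendsto_ellell_nhdsGT_zero : Tendsto ellell (𝓝[>] 0) atTop :=
  tendsto_atTop_add_const_left _ 1 (Real.tendsto_log_atTop.comp tendsto_ell_nhdsGT_zero)

lemma tendsto_ell_mul_rpow_nhdsGT_zero {ε : ℝ} (hε : 0 < ε) :
    Tendsto (fun r => ell r * r ^ ε) (𝓝[>] 0) (𝓝 0) := by
  have hpow : Tendsto (fun r : ℝ => r ^ ε) (𝓝[>] 0) (𝓝 0) := by
    simpa [Real.zero_rpow hε.ne'] using
      (Real.continuousAt_rpow_const 0 ε (Or.inr hε.le)).tendsto.mono_left nhdsWithin_le_nhds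
  have hlog := tendsto_log_mul_rpow_nhdsGT_zero hε
  have hsub : Tendsto (fun r => r ^ ε - Real.log r * r ^ ε) (𝓝[>] 0) (𝓝 0) := by
    simpa using hpow.sub hlog
  refine hsub.congr' ?_
  filter_upwards [Ioo_mem_nhdsGT (zero_lt_one' ℝ)] with r hr
  rw [ell_eq_one_sub_log hr.1 hr.2.le]
  ring

lemma eventually_rpow_le_ell_rpow_neg {k δ : ℝ} (hk : 0 ≤ k) (hδ : 0 < δ) :
    ∀ᶠ r in 𝓝[>] 0, r ^ δ ≤ ell r ^ (-k) := by
  -- passing through the exponent `k + 1 > 0` lets us take a `(k + 1)`-th root also when `k = 0`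
  have hk1 : 0 < k + 1 := by linarith
  filter_upwards [(tendsto_ell_mul_rpow_nhdsGT_zero (div_pos hδ hk1)).eventually_le_const one_pos,
    self_mem_nhdsWithin] with r hr (hr0 : 0 < r)
  have hroot : r ^ (δ / (k + 1)) ≤ ell r ^ (-1 : ℝ) := by
    rw [Real.rpow_neg_one, ← one_div, le_div_iff₀ (ell_pos r)]
    linarith
  calc r ^ δ = (r ^ (δ / (k + 1))) ^ (k + 1) := by
        rw [← Real.rpow_mul hr0.le, div_mul_cancel₀ _ hk1.ne']
    _ ≤ (ell r ^ (-1 : ℝ)) ^ (k + 1) := Real.rpow_le_rpow (by positivity) hroot hk1.le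
    _ = ell r ^ (-(k + 1)) := by rw [← Real.rpow_mul (ell_pos r).le]; ring_nf
    _ ≤ ell r ^ (-k) := Real.rpow_le_rpow_of_exponent_le (ell_ge_one r) (by linarith)

lemma rpow_neg_le_two_rpow_mul_rpow_neg {x y α : ℝ} (hy : 0 < y) (hα : 0 ≤ α)
    (hyx : y ≤ 2 * x) : x ^ (-α) ≤ 2 ^ α * y ^ (-α) :=
  calc x ^ (-α) ≤ (2⁻¹ * y) ^ (-α) :=
        Real.rpow_le_rpow_of_nonpos (by positivity) (by linarith) (neg_nonpos.2 hα)
    _ = 2 ^ α * y ^ (-α) := by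
        rw [Real.mul_rpow (by norm_num) hy.le, Real.inv_rpow zero_le_two, Real.rpow_neg zero_le_two,
          inv_inv]

noncomputable def logWeight (α β γ s : ℝ) : ℝ :=
  ell s ^ (-α) * ellell s ^ (-β) * ellellell s ^ (-γ)

section logWeight

variable {α β γ : ℝ}

lemma logWeight_pos (s : ℝ) : 0 < logWeight α β γ s :=
  mul_pos (mul_pos (Real.rpow_pos_of_pos (ell_pos s) _) (Real.rpow_pos_of_pos (ellell_pos s) _))
    (Real.rpow_pos_of_pos (ellellell_pos s) _)

lemma logWeight_le_one (hα : 0 ≤ α) (hβ : 0 ≤ β) (hγ : 0 ≤ γ) (s : ℝ) :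
    logWeight α β γ s ≤ 1 := by
  have h₁ := Real.rpow_le_one_of_one_le_of_nonpos (ell_ge_one s) (neg_nonpos.2 hα)
  have h₂ := Real.rpow_le_one_of_one_le_of_nonpos (ellell_ge_one s) (neg_nonpos.2 hβ)
  have h₃ := Real.rpow_le_one_of_one_le_of_nonpos (ellellell_ge_one s) (neg_nonpos.2 hγ)
  exact mul_le_one₀ (mul_le_one₀ h₁ (Real.rpow_nonneg (ellell_pos s).le _) h₂)
    (Real.rpow_nonneg (ellellell_pos s).le _) h₃

lemma logWeight_monotoneOn (hα : 0 ≤ α) (hβ : 0 ≤ β) (hγ : 0 ≤ γ) :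
    MonotoneOn (logWeight α β γ) (Ioc 0 1) := fun s hs t ht hst => by
  unfold logWeight
  have h₁ := Real.rpow_le_rpow_of_nonpos (ell_pos t) (ell_antitoneOn hs ht hst) (neg_nonpos.2 hα)
  have h₂ := Real.rpow_le_rpow_of_nonpos (ellell_pos t) (ellell_antitoneOn hs ht hst)
    (neg_nonpos.2 hβ)
  have h₃ := Real.rpow_le_rpow_of_nonpos (ellellell_pos t) (ellellell_antitoneOn hs ht hst)
    (neg_nonpos.2 hγ)
  exact mul_le_mul (mul_le_mul h₁ h₂ (Real.rpow_nonneg (ellell_pos s).le _)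
      (Real.rpow_nonneg (ell_pos t).le _)) h₃ (Real.rpow_nonneg (ellellell_pos s).le _)
    (mul_nonneg (Real.rpow_nonneg (ell_pos t).le _) (Real.rpow_nonneg (ellell_pos t).le _))

lemma logWeight_le_two_rpow_mul (hα : 0 ≤ α) (hβ : 0 ≤ β) (hγ : 0 ≤ γ) {r s : ℝ} (hr : 0 < r)
    (hrs : r ≤ s) (hs : s ≤ √r) (h2 : 2 ≤ ellell r) :
    logWeight α β γ s ≤ 2 ^ (α + β + γ) * logWeight α β γ r := by
  have h₁ := rpow_neg_le_two_rpow_mul_rpow_neg (ell_pos r) hα (ell_le_two_mul_ell hr hrs hs)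
  have h₂ := rpow_neg_le_two_rpow_mul_rpow_neg (ellell_pos r) hβ
    (ellell_le_two_mul_ellell hr hrs hs (h2.trans (ellell_le_ell r)))
  have h₃ := rpow_neg_le_two_rpow_mul_rpow_neg (ellellell_pos r) hγ
    (ellellell_le_two_mul_ellellell hr hrs hs h2)
  have h₁' := (Real.rpow_nonneg (ell_pos s).le (-α)).trans h₁
  have h₂' := (Real.rpow_nonneg (ellell_pos s).le (-β)).trans h₂
  calc logWeight α β γ s
      ≤ (2 ^ α * ell r ^ (-α)) * (2 ^ β * ellell r ^ (-β)) * (2 ^ γ * ellellell r ^ (-γ)) :=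
        mul_le_mul (mul_le_mul h₁ h₂ (Real.rpow_nonneg (ellell_pos s).le _) h₁') h₃
          (Real.rpow_nonneg (ellellell_pos s).le _) (mul_nonneg h₁' h₂')
    _ = 2 ^ (α + β + γ) * logWeight α β γ r := by
        rw [logWeight, Real.rpow_add two_pos, Real.rpow_add two_pos]
        ring

lemma ell_rpow_neg_le_logWeight (hβ : 0 ≤ β) (hγ : 0 ≤ γ) (s : ℝ) :
    ell s ^ (-(α + β + γ)) ≤ logWeight α β γ s := by
  have h₂ := Real.rpow_le_rpow_of_nonpos (ellell_pos s) (ellell_le_ell s) (neg_nonpos.2 hβ)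
  have h₃ := Real.rpow_le_rpow_of_nonpos (ellellell_pos s) (ellellell_le_ell s)
    (neg_nonpos.2 hγ)
  calc ell s ^ (-(α + β + γ)) = ell s ^ (-α) * ell s ^ (-β) * ell s ^ (-γ) := by
        rw [← Real.rpow_add (ell_pos s), ← Real.rpow_add (ell_pos s)]
        ring_nf
    _ ≤ logWeight α β γ s :=
        mul_le_mul (mul_le_mul_of_nonneg_left h₂ (Real.rpow_nonneg (ell_pos s).le _)) h₃
          (Real.rpow_nonneg (ell_pos s).le _)
          (mul_nonneg (Real.rpow_nonneg (ell_pos s).le _) (Real.rpow_nonneg (ellell_pos s).le _))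

lemma eventually_rpow_le_logWeight (hα : 0 ≤ α) (hβ : 0 ≤ β) (hγ : 0 ≤ γ) {δ : ℝ}
    (hδ : 0 < δ) :
    ∀ᶠ r in 𝓝[>] 0, r ^ δ ≤ logWeight α β γ r :=
  (eventually_rpow_le_ell_rpow_neg (by positivity) hδ).mono fun r hr =>
    hr.trans (ell_rpow_neg_le_logWeight hβ hγ r)

end logWeight

lemma lintegral_Ioi_ofReal_rpow {b t : ℝ} (hb : b < -1) (ht : 0 < t) :
    ∫⁻ s in Ioi t, ENNReal.ofReal (s ^ b) = ENNReal.ofReal (-t ^ (b + 1) / (b + 1)) := by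
  rw [← integral_Ioi_rpow_of_lt hb ht,
    ofReal_integral_eq_lintegral_ofReal (integrableOn_Ioi_rpow_of_lt hb ht)]
  filter_upwards [ae_restrict_mem measurableSet_Ioi] with s (hs : t < s)
  exact Real.rpow_nonneg (ht.trans hs).le _

lemma eLpNorm_rpow_Ioi_le {p : ℝ≥0∞} (hp : p ≠ 0) {lam : ℝ} (hlam : lam < 0) :
    ∃ C > 0, ∀ t > 0, eLpNorm (fun s : ℝ => s ^ (lam - (1 / p).toReal)) p
      (volume.restrict (Ioi t)) ≤ ENNReal.ofReal (C * t ^ lam) := by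
  rcases eq_or_ne p ⊤ with rfl | hp_top
  · refine ⟨1, one_pos, fun t ht => ?_⟩
    simp only [ENNReal.div_top, ENNReal.toReal_zero, sub_zero, one_mul, eLpNorm_exponent_top]
    refine eLpNormEssSup_le_of_ae_bound ?_
    filter_upwards [ae_restrict_mem measurableSet_Ioi] with s (hs : t < s)
    rw [Real.norm_of_nonneg (Real.rpow_nonneg (ht.trans hs).le _)]
    exact Real.rpow_le_rpow_of_nonpos ht hs.le hlam.le
  set P := p.toReal
  have hP : 0 < P := ENNReal.toReal_pos hp hp_top
  have hPlam : P * lam < 0 := mul_neg_of_pos_of_neg hP hlam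
  have hexp : (1 / p).toReal = P⁻¹ := by rw [one_div, ENNReal.toReal_inv]
  have hc : 0 < (-(P * lam))⁻¹ := inv_pos.2 (neg_pos.2 hPlam)
  refine ⟨(-(P * lam))⁻¹ ^ P⁻¹, Real.rpow_pos_of_pos hc _, fun t ht => le_of_eq ?_⟩
  have hpow : ∫⁻ s in Ioi t, ‖s ^ (lam - (1 / p).toReal)‖ₑ ^ P
      = ∫⁻ s in Ioi t, ENNReal.ofReal (s ^ (P * lam - 1)) := by
    refine setLIntegral_congr_fun measurableSet_Ioi fun s (hs : t < s) => ?_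
    have hs0 : 0 < s := ht.trans hs
    rw [Real.enorm_eq_ofReal (Real.rpow_nonneg hs0.le _),
      ENNReal.ofReal_rpow_of_nonneg (Real.rpow_nonneg hs0.le _) hP.le, ← Real.rpow_mul hs0.le,
      hexp, sub_mul, inv_mul_cancel₀ hP.ne', mul_comm lam]
  have hval : -t ^ (P * lam - 1 + 1) / (P * lam - 1 + 1) = t ^ (P * lam) * (-(P * lam))⁻¹ := by
    rw [sub_add_cancel, neg_div, ← div_neg, div_eq_mul_inv]
  rw [eLpNorm_eq_lintegral_rpow_enorm_toReal hp hp_top, hpow,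
    lintegral_Ioi_ofReal_rpow (by linarith) ht, hval,
    ENNReal.ofReal_rpow_of_nonneg (mul_nonneg (Real.rpow_nonneg ht.le _) hc.le) (by positivity),
    Real.mul_rpow (Real.rpow_nonneg ht.le _) hc.le, ← Real.rpow_mul ht.le, mul_comm P lam,
    mul_assoc, mul_one_div_cancel hP.ne', mul_one, mul_comm, one_div]

section weightedPower

variable {p : ℝ≥0∞} {lam r : ℝ} {W : ℝ → ℝ}

lemma ofReal_le_eLpNorm_rpow_mul (hp : p ≠ 0) (hlam : lam ≤ 0) (hr : 0 < r) (hr3 : 3 * r ≤ 1)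
    (hW0 : 0 ≤ W r) (hW : ∀ s ∈ Ioo r (2 * r), W r ≤ W s) :
    ENNReal.ofReal (2 ^ (lam - (1 / p).toReal) * (r ^ lam * W r)) ≤
      eLpNorm (fun s => s ^ (lam - (1 / p).toReal) * W s) p (volume.restrict (Ioo r (1 - r))) := by
  set a := (1 / p).toReal with ha_def
  have ha : 1 / p.toReal = a := by simp [ha_def]
  set m := (2 * r) ^ (lam - a) * W r with hm_def
  have hm : 0 ≤ m := mul_nonneg (Real.rpow_nonneg (by positivity) _) hW0
  have hvol : volume.restrict (Ioo r (2 * r)) ≠ 0 := by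
    simp [Measure.restrict_eq_zero, hr]
  calc ENNReal.ofReal (2 ^ (lam - a) * (r ^ lam * W r))
      = ‖m‖ₑ * volume.restrict (Ioo r (2 * r)) univ ^ (1 / p.toReal) := by
        rw [Measure.restrict_apply_univ, Real.volume_Ioo, two_mul, add_sub_cancel_right,
          Real.enorm_eq_ofReal hm, ha, ENNReal.ofReal_rpow_of_nonneg hr.le ENNReal.toReal_nonneg,
          ← ENNReal.ofReal_mul hm]
        congr 1
        have hra : r ^ lam = r ^ (lam - a) * r ^ a := by rw [← Real.rpow_add hr, sub_add_cancel]
        rw [hm_def, Real.mul_rpow zero_le_two hr.le, hra]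
        ring
    _ = eLpNorm (fun _ => m) p (volume.restrict (Ioo r (2 * r))) :=
        (eLpNorm_const m hp hvol).symm
    _ ≤ eLpNorm (fun s => s ^ (lam - a) * W s) p (volume.restrict (Ioo r (2 * r))) := by
        refine eLpNorm_mono_ae ?_
        filter_upwards [ae_restrict_mem measurableSet_Ioo] with s hs
        rw [Real.norm_of_nonneg hm]
        refine le_trans ?_ (le_abs_self _)
        exact mul_le_mul (Real.rpow_le_rpow_of_nonpos (hr.trans hs.1) hs.2.le
          (by linarith [ENNReal.toReal_nonneg (a := 1 / p)])) (hW s hs) hW0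
          (Real.rpow_nonneg (hr.trans hs.1).le _)
    _ ≤ _ := eLpNorm_mono_measure _
        (Measure.restrict_mono (Ioo_subset_Ioo_right (by linarith)) le_rfl)

lemma eLpNorm_rpow_mul_Ioi_le (hp : 1 ≤ p) {K C : ℝ} (hK : 0 ≤ K) (hC0 : 0 ≤ C)
    (hC : ∀ t > 0, eLpNorm (fun s : ℝ => s ^ (lam - (1 / p).toReal)) p
      (volume.restrict (Ioi t)) ≤ ENNReal.ofReal (C * t ^ lam))
    (hr : 0 < r) (hW0 : ∀ s, 0 ≤ W s) (hW1 : ∀ s, W s ≤ 1)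
    (hWK : ∀ s ∈ Ioc r √r, W s ≤ K * W r) (hWr : r ^ (-lam / 2) ≤ W r) :
    eLpNorm (fun s => s ^ (lam - (1 / p).toReal) * W s) p (volume.restrict (Ioi r)) ≤
      ENNReal.ofReal ((K + 1) * C * (r ^ lam * W r)) := by
  set g : ℝ → ℝ := fun s => s ^ (lam - (1 / p).toReal)
  have hg : Measurable g := by fun_prop
  have hKW : 0 ≤ K * W r := mul_nonneg hK (hW0 r)
  have hpointwise : ∀ᵐ s ∂volume.restrict (Ioi r),
      ‖g s * W s‖ ≤ (K * W r) * g s + (Ioi √r).indicator g s := by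
    filter_upwards [ae_restrict_mem measurableSet_Ioi] with s (hs : r < s)
    have hgs : 0 ≤ g s := Real.rpow_nonneg (hr.trans hs).le _
    rw [Real.norm_of_nonneg (mul_nonneg hgs (hW0 s))]
    rcases le_or_gt s √r with hs' | hs'
    · rw [indicator_of_notMem (show s ∉ Ioi √r from not_lt.2 hs'), add_zero, mul_comm]
      exact mul_le_mul_of_nonneg_right (hWK s ⟨hs, hs'⟩) hgs
    · rw [indicator_of_mem (show s ∈ Ioi √r from hs')]
      nlinarith [hW1 s, hW0 s]
  have hsqrt : √r ^ lam ≤ r ^ lam * W r :=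
    calc √r ^ lam = r ^ lam * r ^ (-lam / 2) := by
          rw [Real.sqrt_eq_rpow, ← Real.rpow_mul hr.le, ← Real.rpow_add hr]
          ring_nf
      _ ≤ r ^ lam * W r := mul_le_mul_of_nonneg_left hWr (Real.rpow_nonneg hr.le _)
  calc eLpNorm (fun s => g s * W s) p (volume.restrict (Ioi r))
      ≤ eLpNorm ((K * W r) • g + (Ioi √r).indicator g) p (volume.restrict (Ioi r)) :=
        eLpNorm_mono_ae_real hpointwise
    _ ≤ eLpNorm ((K * W r) • g) p (volume.restrict (Ioi r)) +
          eLpNorm ((Ioi √r).indicator g) p (volume.restrict (Ioi r)) :=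
        eLpNorm_add_le (hg.const_smul _).aestronglyMeasurable
          (hg.indicator measurableSet_Ioi).aestronglyMeasurable hp
    _ ≤ ENNReal.ofReal (K * W r) * ENNReal.ofReal (C * r ^ lam) +
          ENNReal.ofReal (C * √r ^ lam) := by
        rw [eLpNorm_const_smul, Real.enorm_eq_ofReal hKW]
        refine add_le_add (mul_le_mul_right (hC r hr) _) ?_
        calc eLpNorm ((Ioi √r).indicator g) p (volume.restrict (Ioi r))
            ≤ eLpNorm ((Ioi √r).indicator g) p volume :=
              eLpNorm_mono_measure _ Measure.restrict_le_self
          _ = eLpNorm g p (volume.restrict (Ioi √r)) :=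
              eLpNorm_indicator_eq_eLpNorm_restrict measurableSet_Ioi
          _ ≤ _ := hC _ (Real.sqrt_pos.2 hr)
    _ ≤ ENNReal.ofReal ((K + 1) * C * (r ^ lam * W r)) := by
        rw [← ENNReal.ofReal_mul hKW, ← ENNReal.ofReal_add (by positivity) (by positivity)]
        refine ENNReal.ofReal_le_ofReal ?_
        nlinarith [mul_le_mul_of_nonneg_left hsqrt hC0]

end weightedPower

theorem exists_bounds_eLpNorm_rpow_mul_logWeight {p : ℝ≥0∞} (hp : 1 ≤ p) {lam α β γ : ℝ}
    (hlam : lam < 0) (hα : 0 ≤ α) (hβ : 0 ≤ β) (hγ : 0 ≤ γ) :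
    ∃ c C r₀ : ℝ, 0 < c ∧ 0 < C ∧ 0 < r₀ ∧ ∀ r ∈ Ioo (0 : ℝ) r₀,
      ENNReal.ofReal (c * (r ^ lam * logWeight α β γ r)) ≤
          eLpNorm (fun s => s ^ (lam - (1 / p).toReal) * logWeight α β γ s) p
            (volume.restrict (Ioo r (1 - r))) ∧
        eLpNorm (fun s => s ^ (lam - (1 / p).toReal) * logWeight α β γ s) p
            (volume.restrict (Ioo r (1 - r))) ≤
          ENNReal.ofReal (C * (r ^ lam * logWeight α β γ r)) := by
  have hp0 : p ≠ 0 := (zero_lt_one.trans_le hp).ne'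
  obtain ⟨C, hC0, hC⟩ := eLpNorm_rpow_Ioi_le hp0 hlam
  have hev : ∀ᶠ r in 𝓝[>] 0,
      3 * r ≤ 1 ∧ 2 ≤ ellell r ∧ r ^ (-lam / 2) ≤ logWeight α β γ r := by
    have h3 : ∀ᶠ r in 𝓝[>] (0 : ℝ), 3 * r ≤ 1 := by
      filter_upwards [Ioo_mem_nhdsGT (by norm_num : (0 : ℝ) < 1 / 3)] with r hr
      linarith [hr.2]
    exact h3.and ((tendsto_ellell_nhdsGT_zero.eventually_ge_atTop 2).and
      (eventually_rpow_le_logWeight hα hβ hγ (by linarith)))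
  obtain ⟨r₀, hr₀, hsub⟩ := mem_nhdsGT_iff_exists_Ioo_subset.1 hev
  refine ⟨2 ^ (lam - (1 / p).toReal), (2 ^ (α + β + γ) + 1) * C, r₀, by positivity,
    by positivity, hr₀, fun r hr => ?_⟩
  obtain ⟨h3, h2, hWr⟩ := hsub hr
  refine ⟨ofReal_le_eLpNorm_rpow_mul hp0 hlam.le hr.1 h3 (logWeight_pos r).le
    fun s hs => logWeight_monotoneOn hα hβ hγ ⟨hr.1, by linarith⟩
      ⟨hr.1.trans hs.1, by linarith [hs.2]⟩ hs.1.le, ?_⟩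
  exact (eLpNorm_mono_measure _ (Measure.restrict_mono Ioo_subset_Ioi_self le_rfl)).trans
    (eLpNorm_rpow_mul_Ioi_le hp (by positivity) hC0.le hC hr.1 (fun s => (logWeight_pos s).le)
      (logWeight_le_one hα hβ hγ)
      (fun s hs => logWeight_le_two_rpow_mul hα hβ hγ hr.1 hs.1.le hs.2 h2) hWr)

theorem stmt15_general (q q' : ℝ≥0∞) (hconj : 1 / q + 1 / q' = 1)
    (lam : ℝ) (hlam : lam < 0) :
    ∃ c C r₀ : ℝ, 0 < c ∧ 0 < C ∧ 0 < r₀ ∧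
      ∀ r ∈ Set.Ioo (0 : ℝ) r₀,
        ENNReal.ofReal (c * (r ^ lam * ell r ^ (-(1 / q').toReal) *
            ellell r ^ (-(1 / q').toReal) * ellellell r ^ (-1 : ℝ))) ≤
            eLpNorm (fun s : ℝ =>
                s ^ (lam - (1 / q').toReal) * ell s ^ (-(1 / q').toReal) *
                  ellell s ^ (-(1 / q').toReal) * ellellell s ^ (-1 : ℝ))
              q' (volume.restrict (Set.Ioo r (1 - r))) ∧
          eLpNorm (fun s : ℝ =>
                s ^ (lam - (1 / q').toReal) * ell s ^ (-(1 / q').toReal) *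
                  ellell s ^ (-(1 / q').toReal) * ellellell s ^ (-1 : ℝ))
              q' (volume.restrict (Set.Ioo r (1 - r))) ≤
            ENNReal.ofReal (C * (r ^ lam * ell r ^ (-(1 / q').toReal) *
              ellell r ^ (-(1 / q').toReal) * ellellell r ^ (-1 : ℝ))) := by
  have hq' : 1 ≤ q' := ENNReal.inv_le_one.1 <|
    calc q'⁻¹ = 1 / q' := (one_div q').symm
      _ ≤ 1 / q + 1 / q' := le_add_self
      _ = 1 := hconj
  obtain ⟨c, C, r₀, hc, hC, hr₀, h⟩ := exists_bounds_eLpNorm_rpow_mul_logWeight hq' hlam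
    ENNReal.toReal_nonneg ENNReal.toReal_nonneg zero_le_one
  exact ⟨c, C, r₀, hc, hC, hr₀, fun r hr => by simpa only [logWeight, mul_assoc] using h r hr⟩

/-- For `q ∈ [1,∞)` and `λ < 0`:
`‖s^{λ-1/q'} ℓ(s)^{-1/q'} ℓℓ(s)^{-1/q'} ℓℓℓ(s)^{-1}‖_{L^{q'}(r,1-r)}
  ≈ r^λ ℓ(r)^{-1/q'} ℓℓ(r)^{-1/q'} ℓℓℓ(r)^{-1}` near `0`. -/
theorem stmt15 (q q' : ℝ≥0∞) (hq : 1 ≤ q) (hq' : q ≠ ⊤) (hconj : 1 / q + 1 / q' = 1)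
    (lam : ℝ) (hlam : lam < 0) :
    ∃ c C r₀ : ℝ, 0 < c ∧ 0 < C ∧ 0 < r₀ ∧
      ∀ r ∈ Set.Ioo (0 : ℝ) r₀,
        ENNReal.ofReal (c * (r ^ lam * ell r ^ (-(1 / q').toReal) *
            ellell r ^ (-(1 / q').toReal) * ellellell r ^ (-1 : ℝ))) ≤
            eLpNorm (fun s : ℝ =>
                s ^ (lam - (1 / q').toReal) * ell s ^ (-(1 / q').toReal) *
                  ellell s ^ (-(1 / q').toReal) * ellellell s ^ (-1 : ℝ))
              q' (volume.restrict (Set.Ioo r (1 - r))) ∧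
          eLpNorm (fun s : ℝ =>
                s ^ (lam - (1 / q').toReal) * ell s ^ (-(1 / q').toReal) *
                  ellell s ^ (-(1 / q').toReal) * ellellell s ^ (-1 : ℝ))
              q' (volume.restrict (Set.Ioo r (1 - r))) ≤
            ENNReal.ofReal (C * (r ^ lam * ell r ^ (-(1 / q').toReal) *
              ellell r ^ (-(1 / q').toReal) * ellellell r ^ (-1 : ℝ))) :=
  stmt15_general q q' hconj lam hlam
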